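/- Every tuple (q_1,…,q_n) ∈ S²(ℝ^n)ⁿ of symmetric bilinear maps can be written as the sum of an element of W and an element of the image of L^Φ_I; that is, S²(ℝ^n)ⁿ = W + Img L^Φ_I, where I ∈ GL_n(ℝ) is the identity matrix. -/

import Mathlib

open scoped RealInnerProductSpace

noncomputable section

/-- `ℝ^n` with the Euclidean inner product and norm. -/
abbrev E (n : ℕ) : Type := EuclideanSpace ℝ (Fin n)

/-- The symmetric bilinear map `Q_v(ξ,η) = ⟨ξ,η⟩·v − ⟨ξ,v⟩·η − ⟨η,v⟩·ξ`. -/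
def Qv {n : ℕ} (v ξ η : E n) : E n := ⟪ξ, η⟫ • v - ⟪ξ, v⟫ • η - ⟪η, v⟫ • ξ

/-- The bracket `[Q,Q']` of two (symmetric bilinear) maps. -/
def brk {n : ℕ} (Q Q' : E n → E n → E n) (ξ η θ : E n) : E n :=
  (Q ξ (Q' η θ) + Q η (Q' θ ξ) + Q θ (Q' ξ η))
    - (Q' ξ (Q η θ) + Q' η (Q θ ξ) + Q' θ (Q ξ η))

/-- A map `ℝ^n × ℝ^n → ℝ^n` is a symmetric bilinear map. -/
def IsSymmBilin {n : ℕ} (q : E n → E n → E n) : Prop :=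
  (∀ ξ η, q ξ η = q η ξ) ∧ ∀ ξ, IsLinearMap ℝ (q ξ)

/-- The standard basis vectors `e_1, …, e_n` of `ℝ^n`. -/
def stdE (n : ℕ) (i : Fin n) : E n := EuclideanSpace.single i 1

/-- The `i`-th component of `L^Φ_B (A', B')`, where `v = v_i` is the `i`-th column of `B`
and `ω = ω_i` the `i`-th column of `B'`. -/
def LPhiC {n : ℕ} (A' : E n →ₗ[ℝ] E n) (v ω : E n) (ξ η : E n) : E n :=
  A' (Qv v ξ η) - Qv v (A' ξ) η - Qv v ξ (A' η) + Qv ω ξ η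

/-- `(q_1,…,q_n)` lies in the kernel of `L^Ψ_B`, where `v i` are the columns of `B`. -/
def KerPsi {n : ℕ} (v : Fin n → E n) (q : Fin n → E n → E n → E n) : Prop :=
  ∀ i j : Fin n, i < j → ∀ ξ η θ : E n,
    brk (q i) (Qv (v j)) ξ η θ = brk (q j) (Qv (v i)) ξ η θ

/-- `(q_1,…,q_n)` lies in the subspace `W`; `i0` is the index of the first coordinate. -/
def memW {n : ℕ} (i0 : Fin n) (q : Fin n → E n → E n → E n) : Prop :=
  (∀ j, q j (stdE n j) (stdE n j) = 0) ∧
  (∀ i j, ⟪stdE n i, q j (stdE n i) (stdE n i)⟫ + ⟪stdE n j, q i (stdE n j) (stdE n j)⟫ = 0) ∧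
  (∀ j, ⟪stdE n i0, q i0 (stdE n j) (stdE n j)⟫ = 0)

/-!
Only the diagonal values `q_j(e_i,e_i)` enter the conditions defining `W`, and on them
`L^Φ_I(A', ω)` is explicit: its `j`-th component at `(e_i,e_i)` is
`A'e_j + ω_j - 2 A'_{ii} e_j + 2 (A'_{ji} - (ω_j)_i) e_i`. For `i = j` this is
`A'e_j + ρ_j ω_j` with `ρ_j` the reflection in `e_j^⊥`, so whatever `A'` is, the conditions
`q_j(e_j,e_j) = 0` are met by `ω_j = ρ_j (q_j(e_j,e_j) - A'e_j)`. With this `ω`, the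
conditions `⟨e_i, q_j(e_i,e_i)⟩ + ⟨e_j, q_i(e_j,e_j)⟩ = 0` at `i ≠ j` prescribe
`A'_{ij} + A'_{ji}`, and the conditions on `⟨e_1, q_1(e_j,e_j)⟩` prescribe `A'_{jj} - A'_{11}`.
-/

open Matrix

section
variable {n : ℕ}

lemma stdE_apply (i k : Fin n) : stdE n i k = if k = i then 1 else 0 := by
  simp [stdE]

lemma inner_stdE_left (i : Fin n) (x : E n) : ⟪stdE n i, x⟫ = x i := by
  simp [stdE, EuclideanSpace.inner_single_left]

lemma inner_stdE_right (x : E n) (i : Fin n) : ⟪x, stdE n i⟫ = x i := by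
  simp [stdE, EuclideanSpace.inner_single_right]

lemma norm_stdE (i : Fin n) : ‖stdE n i‖ = 1 := by
  simp [stdE]

lemma toEuclideanLin_stdE_apply (M : Matrix (Fin n) (Fin n) ℝ) (k l : Fin n) :
    toEuclideanLin M (stdE n k) l = M l k := by
  simp [stdE]

lemma LPhiC_self (A' : E n →ₗ[ℝ] E n) (v ω ξ : E n) :
    LPhiC A' v ω ξ ξ = ‖ξ‖ ^ 2 • (A' v + ω) - (2 * ⟪A' ξ, ξ⟫) • v
      + (2 * (⟪A' ξ, v⟫ - ⟪ξ, ω⟫)) • ξ := by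
  simp only [LPhiC, Qv, map_sub, map_smul, real_inner_self_eq_norm_sq, real_inner_comm ξ]
  module

lemma LPhiC_stdE_apply (A' : E n →ₗ[ℝ] E n) (ω : E n) (i j k : Fin n) :
    LPhiC A' (stdE n j) ω (stdE n i) (stdE n i) k =
      A' (stdE n j) k + ω k - 2 * A' (stdE n i) i * (if k = j then 1 else 0)
        + 2 * (A' (stdE n i) j - ω i) * (if k = i then 1 else 0) := by
  simp [LPhiC_self, norm_stdE, inner_stdE_left, inner_stdE_right, stdE_apply]

def reflectStdE (j : Fin n) (x : E n) : E n := x - (2 * x j) • stdE n j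

def diagCorrection (q : Fin n → E n → E n → E n) (A' : E n →ₗ[ℝ] E n) (j : Fin n) : E n :=
  reflectStdE j (q j (stdE n j) (stdE n j) - A' (stdE n j))

lemma sub_LPhiC_diagCorrection_self (q : Fin n → E n → E n → E n) (A' : E n →ₗ[ℝ] E n)
    (j : Fin n) :
    q j (stdE n j) (stdE n j) - LPhiC A' (stdE n j) (diagCorrection q A' j) (stdE n j) (stdE n j)
      = 0 := by
  ext k
  simp [LPhiC_stdE_apply, diagCorrection, reflectStdE, stdE_apply]
  split_ifs <;> ring

lemma inner_stdE_sub_LPhiC_diagCorrection (q : Fin n → E n → E n → E n) (A' : E n →ₗ[ℝ] E n)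
    {i j : Fin n} (hij : i ≠ j) :
    ⟪stdE n i, q j (stdE n i) (stdE n i)
        - LPhiC A' (stdE n j) (diagCorrection q A' j) (stdE n i) (stdE n i)⟫
      = q j (stdE n i) (stdE n i) i + q j (stdE n j) (stdE n j) i
          - 2 * (A' (stdE n j) i + A' (stdE n i) j) := by
  simp [inner_stdE_left, LPhiC_stdE_apply, diagCorrection, reflectStdE, stdE_apply, hij]
  ring

lemma inner_stdE_self_sub_LPhiC_diagCorrection (q : Fin n → E n → E n → E n)
    (A' : E n →ₗ[ℝ] E n) {i j : Fin n} (hij : i ≠ j) :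
    ⟪stdE n j, q j (stdE n i) (stdE n i)
        - LPhiC A' (stdE n j) (diagCorrection q A' j) (stdE n i) (stdE n i)⟫
      = q j (stdE n i) (stdE n i) j + q j (stdE n j) (stdE n j) j
          - 2 * (A' (stdE n j) j - A' (stdE n i) i) := by
  simp [inner_stdE_left, LPhiC_stdE_apply, diagCorrection, reflectStdE, stdE_apply, hij.symm]
  ring

def correctionMatrix (q : Fin n → E n → E n → E n) (i0 : Fin n) : Matrix (Fin n) (Fin n) ℝ :=
  Matrix.of fun i j =>
    if i = j then
      if i = i0 then 0
      else -(q i0 (stdE n i) (stdE n i) i0 + q i0 (stdE n i0) (stdE n i0) i0) / 2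
    else (q j (stdE n i) (stdE n i) i + q j (stdE n j) (stdE n j) i
      + q i (stdE n j) (stdE n j) j + q i (stdE n i) (stdE n i) j) / 8

end

/-- substance of the proof of Lemma `lemma:H`:
`S²(ℝ^n)ⁿ = W + Img L^Φ_I`: every tuple of symmetric bilinear maps is the sum of an
element of `W` and an element of the image of `L^Φ_I`. -/
theorem stmt5 {n : ℕ} (hn : 1 ≤ n)
    (q : Fin n → E n → E n → E n) :
    ∃ (A' : E n →ₗ[ℝ] E n) (ω : Fin n → E n),
      memW ⟨0, by omega⟩ (fun i ξ η => q i ξ η - LPhiC A' (stdE n i) (ω i) ξ η) := by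
  set i0 : Fin n := ⟨0, by omega⟩
  set A' := toEuclideanLin (correctionMatrix q i0)
  have hdiag := sub_LPhiC_diagCorrection_self q A'
  refine ⟨A', diagCorrection q A', hdiag, fun i j => ?_, fun j => ?_⟩
  · obtain rfl | hij := eq_or_ne i j
    · simp [hdiag]
    rw [inner_stdE_sub_LPhiC_diagCorrection q A' hij,
      inner_stdE_sub_LPhiC_diagCorrection q A' hij.symm]
    simp only [A', toEuclideanLin_stdE_apply, correctionMatrix, of_apply, if_neg hij,
      if_neg hij.symm]
    ring
  · obtain rfl | hj := eq_or_ne j i0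
    · simp [hdiag]
    rw [inner_stdE_self_sub_LPhiC_diagCorrection q A' hj]
    simp only [A', toEuclideanLin_stdE_apply, correctionMatrix, of_apply, ↓reduceIte,
      if_neg hj]
    ring

end
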